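/- Let U be uniform on {−1,+1}, let k ≥ 1, and let A₁, …, A_k be random variables taking values in finite sets that are conditionally independent given U, i.e., P(A₁=a₁, …, A_k=a_k | U=u) = Π_{i=1}^k f_i(a_i, u) where each f_i(·,u) is a probability mass function for each u ∈ {−1,+1}. Then E[(E[U | A₁, …, A_k])²] ≤ Σ_{i=1}^k E[(E[U | A_i])²]. -/

import Mathlib

open Finset
open scoped Classical

noncomputable section

/-- Probability of an event under the probability mass function `p` on `Ω`. -/
def pr {Ω : Type*} [Fintype Ω] (p : Ω → ℝ) (E : Ω → Prop) : ℝ :=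
  ∑ ω ∈ Finset.univ.filter (fun ω => E ω), p ω

/-- Expectation of `f` under `p`. -/
def expec {Ω : Type*} [Fintype Ω] (p : Ω → ℝ) (f : Ω → ℝ) : ℝ :=
  ∑ ω, p ω * f ω

/-- The conditional expectation `E[U | A]`, as a random variable on `Ω`. -/
def condExp {Ω α : Type*} [Fintype Ω] (p : Ω → ℝ) (A : Ω → α) (U : Ω → ℝ) : Ω → ℝ :=
  fun ω => expec p (fun ω' => if A ω' = A ω then U ω' else 0) / pr p (fun ω' => A ω' = A ω)

/-- The variance of `f` under `p`. -/
def var {Ω : Type*} [Fintype Ω] (p : Ω → ℝ) (f : Ω → ℝ) : ℝ :=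
  expec p (fun ω => (f ω - expec p f)^2)

/-- The chi-squared mutual information `I2(A;B)`. -/
def I2 {Ω α β : Type*} [Fintype Ω] (p : Ω → ℝ) (A : Ω → α) (B : Ω → β) : ℝ :=
  ∑ a ∈ Finset.univ.image A, ∑ b ∈ Finset.univ.image B,
    if 0 < pr p (fun ω => A ω = a) * pr p (fun ω => B ω = b) then
      (pr p (fun ω => A ω = a ∧ B ω = b) - pr p (fun ω => A ω = a) * pr p (fun ω => B ω = b))^2
        / (pr p (fun ω => A ω = a) * pr p (fun ω => B ω = b))
    else 0

/- ### Auxiliary machinery -/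

/-- Triangular-discrimination summand. -/
def Dd (x y : ℝ) : ℝ := (x - y)^2 / (2*(x+y))

/-- Cross-term coefficient. -/
def Cc (x y : ℝ) : ℝ := (x - y)*(x*y) / (x+y)^2

lemma Dd_nonneg {x y : ℝ} (hx : 0 ≤ x) (hy : 0 ≤ y) : 0 ≤ Dd x y := by
  unfold Dd
  apply div_nonneg (sq_nonneg _)
  nlinarith

/-- The pointwise key inequality. -/
lemma lemA {x y z w : ℝ} (hx : 0 ≤ x) (hy : 0 ≤ y) (hz : 0 ≤ z) (hw : 0 ≤ w) :
    Dd (x*z) (y*w) ≤ Dd x y * ((z+w)/2) + Dd z w * ((x+y)/2)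
      + Cc x y * (z - w) + Cc z w * (x - y) := by
  rcases eq_or_lt_of_le (add_nonneg hx hy) with hm | hm
  · obtain ⟨rfl, rfl⟩ : x = 0 ∧ y = 0 := by constructor <;> linarith
    simp [Dd, Cc]
  rcases eq_or_lt_of_le (add_nonneg hz hw) with hn | hn
  · obtain ⟨rfl, rfl⟩ : z = 0 ∧ w = 0 := by constructor <;> linarith
    simp [Dd, Cc]
  rcases eq_or_lt_of_le (add_nonneg (mul_nonneg hx hz) (mul_nonneg hy hw)) with hd | hd
  · -- degenerate: x*z + y*w = 0  (so x*z = 0 and y*w = 0)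
    have hxz : x * z = 0 := by nlinarith [mul_nonneg hx hz, mul_nonneg hy hw]
    have hyw : y * w = 0 := by nlinarith [mul_nonneg hx hz, mul_nonneg hy hw]
    have hL : Dd (x*z) (y*w) = 0 := by rw [hxz, hyw]; simp [Dd]
    rw [hL]
    rcases mul_eq_zero.mp hxz with rfl | rfl
    · rcases mul_eq_zero.mp hyw with rfl | rfl
      · simp at hm
      · -- x = 0, w = 0
        simp only [Cc, Dd]
        have h1 : 0 ≤ (0 - y)^2 / (2*(0+y)) * ((z+0)/2) := by
          apply mul_nonneg (div_nonneg (sq_nonneg _) (by linarith)) (by linarith)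
        have h2 : 0 ≤ (z - 0)^2 / (2*(z+0)) * ((0+y)/2) := by
          apply mul_nonneg (div_nonneg (sq_nonneg _) (by linarith)) (by linarith)
        have h3 : (0 - y)*(0*y) / (0+y)^2 * (z - 0) = 0 := by ring_nf
        have h4 : (z - 0)*(z*0) / (z+0)^2 * (0 - y) = 0 := by ring_nf
        linarith [h1, h2, h3, h4]
    · rcases mul_eq_zero.mp hyw with rfl | rfl
      · -- z = 0, y = 0
        simp only [Cc, Dd]
        have h1 : 0 ≤ (x - 0)^2 / (2*(x+0)) * ((0+w)/2) := by
          apply mul_nonneg (div_nonneg (sq_nonneg _) (by linarith)) (by linarith)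
        have h2 : 0 ≤ (0 - w)^2 / (2*(0+w)) * ((x+0)/2) := by
          apply mul_nonneg (div_nonneg (sq_nonneg _) (by linarith)) (by linarith)
        have h3 : (x - 0)*(x*0) / (x+0)^2 * (0 - w) = 0 := by ring_nf
        have h4 : (0 - w)*(0*w) / (0+w)^2 * (x - 0) = 0 := by ring_nf
        linarith [h1, h2, h3, h4]
      · simp at hn
  · -- main case
    have hm' : x + y ≠ 0 := ne_of_gt hm
    have hn' : z + w ≠ 0 := ne_of_gt hn
    have hd' : x*z + y*w ≠ 0 := ne_of_gt hd
    have key : Dd x y * ((z+w)/2) + Dd z w * ((x+y)/2) + Cc x y * (z - w) + Cc z w * (x - y)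
        - Dd (x*z) (y*w)
        = ((x-y)^2*(z-w)^2*(4*(x*y)*(z+w)^2 + 4*(z*w)*(x+y)^2))
            / (8*(x+y)^2*(z+w)^2*(x*z+y*w)) := by
      unfold Dd Cc
      field_simp
      ring
    have hnum : 0 ≤ (x-y)^2*(z-w)^2*(4*(x*y)*(z+w)^2 + 4*(z*w)*(x+y)^2) := by
      have : 0 ≤ 4*(x*y)*(z+w)^2 + 4*(z*w)*(x+y)^2 := by
        have := mul_nonneg hx hy
        have := mul_nonneg hz hw
        positivity
      positivity
    have hden : 0 < 8*(x+y)^2*(z+w)^2*(x*z+y*w) := by positivity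
    have : 0 ≤ ((x-y)^2*(z-w)^2*(4*(x*y)*(z+w)^2 + 4*(z*w)*(x+y)^2))
            / (8*(x+y)^2*(z+w)^2*(x*z+y*w)) := div_nonneg hnum (le_of_lt hden)
    linarith [key, this]

/-- Two-fold subadditivity. -/
lemma lemB {β γ : Type*} [Fintype β] [Fintype γ] (P Q : β → ℝ) (R S : γ → ℝ)
    (hP : ∀ b, 0 ≤ P b) (hQ : ∀ b, 0 ≤ Q b) (hR : ∀ c, 0 ≤ R c) (hS : ∀ c, 0 ≤ S c)
    (hPs : ∑ b, P b = 1) (hQs : ∑ b, Q b = 1) (hRs : ∑ c, R c = 1) (hSs : ∑ c, S c = 1) :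
    ∑ b, ∑ c, Dd (P b * R c) (Q b * S c) ≤ ∑ b, Dd (P b) (Q b) + ∑ c, Dd (R c) (S c) := by
  have step : ∑ b, ∑ c, Dd (P b * R c) (Q b * S c)
      ≤ ∑ b, ∑ c, (Dd (P b) (Q b) * ((R c + S c)/2) + Dd (R c) (S c) * ((P b + Q b)/2)
          + Cc (P b) (Q b) * (R c - S c) + Cc (R c) (S c) * (P b - Q b)) :=
    Finset.sum_le_sum fun b _ => Finset.sum_le_sum fun c _ => lemA (hP b) (hQ b) (hR c) (hS c)
  refine step.trans_eq ?_
  have hRS : ∑ c, (R c + S c)/2 = 1 := by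
    rw [← Finset.sum_div, Finset.sum_add_distrib, hRs, hSs]; norm_num
  have hPQ : ∑ b, (P b + Q b)/2 = 1 := by
    rw [← Finset.sum_div, Finset.sum_add_distrib, hPs, hQs]; norm_num
  have hRS0 : ∑ c, (R c - S c) = 0 := by rw [Finset.sum_sub_distrib, hRs, hSs]; ring
  have hPQ0 : ∑ b, (P b - Q b) = 0 := by rw [Finset.sum_sub_distrib, hPs, hQs]; ring
  have inner : ∀ b, ∑ c, (Dd (P b) (Q b) * ((R c + S c)/2) + Dd (R c) (S c) * ((P b + Q b)/2)
          + Cc (P b) (Q b) * (R c - S c) + Cc (R c) (S c) * (P b - Q b))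
      = Dd (P b) (Q b) + (∑ c, Dd (R c) (S c)) * ((P b + Q b)/2)
          + (∑ c, Cc (R c) (S c)) * (P b - Q b) := by
    intro b
    rw [Finset.sum_add_distrib, Finset.sum_add_distrib, Finset.sum_add_distrib,
      ← Finset.mul_sum, ← Finset.sum_mul, ← Finset.mul_sum, ← Finset.sum_mul,
      hRS, hRS0, mul_one, mul_zero, add_zero]
  rw [Finset.sum_congr rfl (fun b _ => inner b)]
  rw [Finset.sum_add_distrib, Finset.sum_add_distrib,
    ← Finset.mul_sum, ← Finset.mul_sum, hPQ, hPQ0, mul_one, mul_zero, add_zero]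

/-- Core subadditivity over product experiments. -/
lemma core (k : ℕ) : ∀ (α : Fin k → Type u) (_ : ∀ i, Fintype (α i))
    (F G : ∀ i, α i → ℝ),
    (∀ i c, 0 ≤ F i c) → (∀ i c, 0 ≤ G i c) →
    (∀ i, ∑ c, F i c = 1) → (∀ i, ∑ c, G i c = 1) →
    ∑ a : ∀ i, α i, Dd (∏ i, F i (a i)) (∏ i, G i (a i)) ≤ ∑ i, ∑ c, Dd (F i c) (G i c) := by
  induction k with
  | zero =>
    intro α _ F G hF hG hFs hGs
    simp [Dd]
  | succ k ih =>
    intro α instα F G hF hG hFs hGs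
    rw [← Equiv.sum_comp (Fin.consEquiv α)
      (fun a => Dd (∏ i, F i (a i)) (∏ i, G i (a i)))]
    rw [Fintype.sum_prod_type]
    have hc : ∀ (H : ∀ i, α i → ℝ) (x : α 0) (g : ∀ i : Fin k, α i.succ),
        ∏ i, H i ((Fin.consEquiv α) (x, g) i) = H 0 x * ∏ i : Fin k, H i.succ (g i) := by
      intro H x g
      rw [Fin.prod_univ_succ]
      simp [Fin.consEquiv]
    simp only [hc]
    have hRsum : ∑ g : ∀ i : Fin k, α i.succ, ∏ i, F i.succ (g i) = 1 := by
      rw [← Fintype.prod_sum]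
      simp only [hFs]
      simp
    have hSsum : ∑ g : ∀ i : Fin k, α i.succ, ∏ i, G i.succ (g i) = 1 := by
      rw [← Fintype.prod_sum]
      simp only [hGs]
      simp
    have hB := lemB (F 0) (G 0) (fun g : ∀ i : Fin k, α i.succ => ∏ i, F i.succ (g i))
      (fun g => ∏ i, G i.succ (g i))
      (fun b => hF 0 b) (fun b => hG 0 b)
      (fun g => Finset.prod_nonneg fun i _ => hF i.succ (g i))
      (fun g => Finset.prod_nonneg fun i _ => hG i.succ (g i))
      (hFs 0) (hGs 0) hRsum hSsum
    refine hB.trans ?_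
    rw [Fin.sum_univ_succ]
    exact add_le_add_right
      (ih (fun i => α i.succ) (fun i => instα i.succ) (fun i => F i.succ) (fun i => G i.succ)
        (fun i c => hF i.succ c) (fun i c => hG i.succ c)
        (fun i => hFs i.succ) (fun i => hGs i.succ)) _

section Helpers
variable {Ω : Type*} [Fintype Ω]

lemma pr_eq_sum_ite (p : Ω → ℝ) (E : Ω → Prop) :
    pr p E = ∑ ω, if E ω then p ω else 0 := by
  rw [pr, Finset.sum_filter]

lemma pr_congr (p : Ω → ℝ) {E F : Ω → Prop} (h : ∀ ω, E ω ↔ F ω) : pr p E = pr p F := by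
  rw [pr_eq_sum_ite, pr_eq_sum_ite]
  exact Finset.sum_congr rfl fun ω _ => by simp [h ω]

lemma pr_false (p : Ω → ℝ) : pr p (fun _ => False) = 0 := by
  rw [pr_eq_sum_ite]; simp

lemma pr_split (p : Ω → ℝ) (U : Ω → ℝ) (hUr : ∀ ω, U ω = 1 ∨ U ω = -1) (E : Ω → Prop) :
    pr p E = pr p (fun ω => U ω = 1 ∧ E ω) + pr p (fun ω => U ω = -1 ∧ E ω) := by
  simp only [pr_eq_sum_ite, ← Finset.sum_add_distrib]
  refine Finset.sum_congr rfl fun ω _ => ?_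
  rcases hUr ω with h | h <;> by_cases hE : E ω <;> simp [h, hE] <;> norm_num

lemma expec_ite_eq (p : Ω → ℝ) (U : Ω → ℝ) (hUr : ∀ ω, U ω = 1 ∨ U ω = -1) (Q : Ω → Prop) :
    expec p (fun ω => if Q ω then U ω else 0)
      = pr p (fun ω => U ω = 1 ∧ Q ω) - pr p (fun ω => U ω = -1 ∧ Q ω) := by
  simp only [expec, pr_eq_sum_ite, ← Finset.sum_sub_distrib]
  refine Finset.sum_congr rfl fun ω _ => ?_
  rcases hUr ω with h | h <;> by_cases hQ : Q ω <;> simp [h, hQ] <;> norm_num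

lemma expec_comp {β : Type*} [Fintype β] (p : Ω → ℝ) (B : Ω → β) (g : β → ℝ) :
    expec p (fun ω => g (B ω)) = ∑ b, pr p (fun ω => B ω = b) * g b := by
  simp only [pr_eq_sum_ite, Finset.sum_mul, expec]
  rw [Finset.sum_comm]
  refine Finset.sum_congr rfl fun ω _ => ?_
  have hb : ∀ b, (if B ω = b then p ω else 0) * g b = if B ω = b then p ω * g b else 0 :=
    fun b => by split <;> simp
  rw [Finset.sum_congr rfl fun b _ => hb b, Finset.sum_ite_eq]
  simp

lemma pr_fiber {β : Type*} [Fintype β] (p : Ω → ℝ) (B : Ω → β) (E : Ω → Prop) :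
    pr p E = ∑ b, pr p (fun ω => E ω ∧ B ω = b) := by
  simp only [pr_eq_sum_ite]
  rw [Finset.sum_comm]
  refine Finset.sum_congr rfl fun ω _ => ?_
  by_cases hE : E ω
  · simp only [hE, true_and, if_true]
    rw [Finset.sum_ite_eq]
    simp
  · simp [hE]

end Helpers

/-- Summing a product over a fiber of one coordinate. -/
lemma sum_pi_ite {k : ℕ} {α : Fin k → Type*} [∀ j, Fintype (α j)]
    (F : ∀ j, α j → ℝ) (hFs : ∀ j, ∑ c, F j c = 1) (i : Fin k) (b : α i) :
    (∑ a : ∀ j, α j, if a i = b then ∏ j, F j (a j) else 0) = F i b := by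
  set G : ∀ j, α j → ℝ := fun j c =>
    if (Sigma.mk j c) = (Sigma.mk i b) then F j c else if j = i then 0 else F j c with hG
  have h1 : ∀ a : ∀ j, α j, (if a i = b then ∏ j, F j (a j) else 0) = ∏ j, G j (a j) := by
    intro a
    by_cases h : a i = b
    · rw [if_pos h]
      refine Finset.prod_congr rfl fun j _ => ?_
      by_cases hj : j = i
      · subst hj
        simp [hG, h]
      · simp [hG, hj]
    · rw [if_neg h]
      refine (Finset.prod_eq_zero (Finset.mem_univ i) ?_).symm
      simp [hG, h]
  have h2 : ∀ j, j ≠ i → ∑ c, G j c = 1 := by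
    intro j hj
    rw [← hFs j]
    refine Finset.sum_congr rfl fun c _ => ?_
    simp [hG, hj]
  have h3 : ∑ c, G i c = F i b := by
    have : ∀ c, G i c = if c = b then F i c else 0 := by
      intro c
      by_cases hc : c = b <;> simp [hG, hc]
    simp only [this]
    simp
  calc (∑ a : ∀ j, α j, if a i = b then ∏ j, F j (a j) else 0)
      = ∑ a : ∀ j, α j, ∏ j, G j (a j) := Finset.sum_congr rfl fun a _ => h1 a
    _ = ∏ j, ∑ c, G j c := (Fintype.prod_sum G).symm
    _ = ∑ c, G i c := Fintype.prod_eq_single i h2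
    _ = F i b := h3

/-- Ratio-square identity. -/
lemma ratio_sq (a b : ℝ) (ha : 0 ≤ a) (hb : 0 ≤ b) :
    (1/2*a + 1/2*b) * ((1/2*a - 1/2*b)/(1/2*a + 1/2*b))^2 = Dd a b := by
  by_cases h : a + b = 0
  · obtain ⟨rfl, rfl⟩ : a = 0 ∧ b = 0 := by constructor <;> linarith
    simp [Dd]
  · have h2 : 1/2*a + 1/2*b ≠ 0 := fun hc => h (by linarith)
    have h3 : (2:ℝ)*(a+b) ≠ 0 := fun hc => h (by linarith)
    unfold Dd
    field_simp

/-- If `U` is uniform on `{-1,+1}` and `A₁, …, A_k` (`k ≥ 1`) are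
conditionally independent given `U`, then
`E[(E[U | A₁,…,A_k])²] ≤ ∑ i, E[(E[U | A_i])²]`. -/
theorem stmt5 {Ω : Type*} [Fintype Ω] {k : ℕ} (hk : 1 ≤ k)
    {α : Fin k → Type*} [∀ i, Fintype (α i)]
    (p : Ω → ℝ) (hp : ∀ ω, 0 ≤ p ω) (hps : ∑ ω, p ω = 1)
    (U : Ω → ℝ) (hUr : ∀ ω, U ω = 1 ∨ U ω = -1)
    (A : (i : Fin k) → Ω → α i)
    (f : (i : Fin k) → α i → ℝ → ℝ)
    (hf0 : ∀ i a s, (s = 1 ∨ s = -1) → 0 ≤ f i a s)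
    (hf1 : ∀ i s, (s = 1 ∨ s = -1) → ∑ a, f i a s = 1)
    (hjoint : ∀ u : ℝ, (u = 1 ∨ u = -1) → ∀ a : (i : Fin k) → α i,
      pr p (fun ω => U ω = u ∧ ∀ i, A i ω = a i) = 1/2 * ∏ i, f i (a i) u) :
    expec p (fun ω => (condExp p (fun ω' (i : Fin k) => A i ω') U ω)^2)
      ≤ ∑ i, expec p (fun ω => (condExp p (A i) U ω)^2) := by
  classical
  set X : (∀ i, α i) → ℝ := fun a => ∏ i, f i (a i) 1 with hX
  set Y : (∀ i, α i) → ℝ := fun a => ∏ i, f i (a i) (-1) with hY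
  have hXnn : ∀ a, 0 ≤ X a := fun a =>
    Finset.prod_nonneg fun i _ => hf0 i (a i) 1 (Or.inl rfl)
  have hYnn : ∀ a, 0 ≤ Y a := fun a =>
    Finset.prod_nonneg fun i _ => hf0 i (a i) (-1) (Or.inr rfl)
  set Atup : Ω → (∀ i, α i) := fun ω i => A i ω with hAtup
  -- joint probabilities in tuple form
  have hprX : ∀ a : ∀ i, α i, pr p (fun ω => U ω = 1 ∧ Atup ω = a) = 1/2 * X a := by
    intro a
    rw [pr_congr p (F := fun ω => U ω = 1 ∧ ∀ i, A i ω = a i)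
      (fun ω => by simp [hAtup, funext_iff])]
    exact hjoint 1 (Or.inl rfl) a
  have hprY : ∀ a : ∀ i, α i, pr p (fun ω => U ω = -1 ∧ Atup ω = a) = 1/2 * Y a := by
    intro a
    rw [pr_congr p (F := fun ω => U ω = -1 ∧ ∀ i, A i ω = a i)
      (fun ω => by simp [hAtup, funext_iff])]
    exact hjoint (-1) (Or.inr rfl) a
  -- marginals of single coordinates
  have hmarg : ∀ (u : ℝ), (u = 1 ∨ u = -1) → ∀ (i : Fin k) (b : α i),
      pr p (fun ω => U ω = u ∧ A i ω = b) = 1/2 * f i b u := by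
    intro u hu i b
    rw [pr_fiber p Atup (fun ω => U ω = u ∧ A i ω = b)]
    have hterm : ∀ a : ∀ j, α j,
        pr p (fun ω => (U ω = u ∧ A i ω = b) ∧ Atup ω = a)
          = if a i = b then 1/2 * ∏ j, f j (a j) u else 0 := by
      intro a
      by_cases hb : a i = b
      · rw [if_pos hb]
        rw [pr_congr p (F := fun ω => U ω = u ∧ ∀ j, A j ω = a j) (fun ω => by
          constructor
          · rintro ⟨⟨hu1, _⟩, ha⟩
            exact ⟨hu1, fun j => congrFun ha j⟩
          · rintro ⟨hu1, ha⟩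
            exact ⟨⟨hu1, (ha i).trans hb⟩, funext ha⟩)]
        exact hjoint u hu a
      · rw [if_neg hb]
        rw [pr_congr p (F := fun _ => False) (fun ω => by
          constructor
          · rintro ⟨⟨_, hAb⟩, ha⟩
            exact hb ((congrFun ha i).symm.trans hAb)
          · intro h; exact h.elim)]
        exact pr_false p
    rw [Finset.sum_congr rfl fun a _ => hterm a]
    have : (∑ a : ∀ j, α j, if a i = b then 1/2 * ∏ j, f j (a j) u else 0)
        = 1/2 * ∑ a : ∀ j, α j, if a i = b then ∏ j, f j (a j) u else 0 := by
      rw [Finset.mul_sum]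
      exact Finset.sum_congr rfl fun a _ => by split <;> simp
    rw [this, sum_pi_ite (fun j c => f j c u) (fun j => hf1 j u hu) i b]
  -- LHS rewriting
  have hceL : ∀ ω, condExp p Atup U ω
      = (1/2 * X (Atup ω) - 1/2 * Y (Atup ω)) / (1/2 * X (Atup ω) + 1/2 * Y (Atup ω)) := by
    intro ω
    simp only [condExp]
    rw [expec_ite_eq p U hUr, hprX (Atup ω), hprY (Atup ω),
      pr_split p U hUr (fun ω' => Atup ω' = Atup ω), hprX (Atup ω), hprY (Atup ω)]
  have hLHS : expec p (fun ω => (condExp p Atup U ω)^2) = ∑ a : ∀ i, α i, Dd (X a) (Y a) := by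
    have h1 : (fun ω => (condExp p Atup U ω)^2)
        = fun ω => (fun a => ((1/2 * X a - 1/2 * Y a) / (1/2 * X a + 1/2 * Y a))^2) (Atup ω) := by
      funext ω
      rw [hceL ω]
    rw [h1, expec_comp p Atup (fun a => ((1/2 * X a - 1/2 * Y a) / (1/2 * X a + 1/2 * Y a))^2)]
    refine Finset.sum_congr rfl fun a _ => ?_
    have hden : pr p (fun ω => Atup ω = a) = 1/2 * X a + 1/2 * Y a := by
      rw [pr_split p U hUr (fun ω => Atup ω = a), hprX a, hprY a]
    rw [hden]
    exact ratio_sq (X a) (Y a) (hXnn a) (hYnn a)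
  -- RHS rewriting
  have hRHS : ∀ i, expec p (fun ω => (condExp p (A i) U ω)^2)
      = ∑ b, Dd (f i b 1) (f i b (-1)) := by
    intro i
    have hce : ∀ ω, condExp p (A i) U ω
        = (1/2 * f i (A i ω) 1 - 1/2 * f i (A i ω) (-1))
            / (1/2 * f i (A i ω) 1 + 1/2 * f i (A i ω) (-1)) := by
      intro ω
      simp only [condExp]
      rw [expec_ite_eq p U hUr, hmarg 1 (Or.inl rfl) i (A i ω), hmarg (-1) (Or.inr rfl) i (A i ω),
        pr_split p U hUr (fun ω' => A i ω' = A i ω),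
        hmarg 1 (Or.inl rfl) i (A i ω), hmarg (-1) (Or.inr rfl) i (A i ω)]
    have h1 : (fun ω => (condExp p (A i) U ω)^2)
        = fun ω => (fun b => ((1/2 * f i b 1 - 1/2 * f i b (-1))
            / (1/2 * f i b 1 + 1/2 * f i b (-1)))^2) (A i ω) := by
      funext ω
      rw [hce ω]
    rw [h1, expec_comp p (A i) (fun b => ((1/2 * f i b 1 - 1/2 * f i b (-1))
            / (1/2 * f i b 1 + 1/2 * f i b (-1)))^2)]
    refine Finset.sum_congr rfl fun b _ => ?_
    have hden : pr p (fun ω => A i ω = b) = 1/2 * f i b 1 + 1/2 * f i b (-1) := by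
      rw [pr_split p U hUr (fun ω => A i ω = b), hmarg 1 (Or.inl rfl) i b,
        hmarg (-1) (Or.inr rfl) i b]
    rw [hden]
    exact ratio_sq _ _ (hf0 i b 1 (Or.inl rfl)) (hf0 i b (-1) (Or.inr rfl))
  rw [hLHS, Finset.sum_congr rfl fun i _ => hRHS i]
  exact core k α inferInstance (fun i c => f i c 1) (fun i c => f i c (-1))
    (fun i c => hf0 i c 1 (Or.inl rfl)) (fun i c => hf0 i c (-1) (Or.inr rfl))
    (fun i => hf1 i 1 (Or.inl rfl)) (fun i => hf1 i (-1) (Or.inr rfl))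

end
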